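/- arXiv:1702.02517 — 4 statements merged into one kernel-verified Lean document; each statement's English description precedes it below -/
import Mathlib

section
/- If n : [0,∞) → ℝ satisfies n' (t) = α(t)(1 - n(t)) - β(t) n(t) with α(t) ≥ 0 and β(t) ≥ 0 continuous, and n(0) ∈ [0,1], then n(t) ∈ [0,1] for all t ≥ 0. -/
/-! Each endpoint of `[0, 1]` is a barrier: at a time where `n ≤ 0` the right-hand side
`α (1 - n) - β n` is nonnegative, and where `n ≥ 1` it is nonpositive. A function whose derivative
is nonnegative wherever the function is nonpositive cannot go from `0 ≤ f a` to `f b < 0`: on the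
stretch after the last time in `[a, b]` at which `f ≥ 0` it would be monotone. Apply this to `n`
and to `1 - n`. -/

open Set

theorem nonneg_of_hasDerivAt_of_nonpos_imp_deriv_nonneg {f f' : ℝ → ℝ} {a b : ℝ}
    (hf : ∀ t ∈ Ici a, HasDerivAt f (f' t) t) (hf' : ∀ t ∈ Ici a, f t ≤ 0 → 0 ≤ f' t)
    (ha : 0 ≤ f a) (hab : a ≤ b) : 0 ≤ f b := by
  by_contra! hb
  have hcont : ContinuousOn f (Icc a b) := fun t ht =>
    (hf t ht.1).continuousAt.continuousWithinAt
  set S := Icc a b ∩ f ⁻¹' Ici 0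
  have hS : IsCompact S := isCompact_Icc.of_isClosed_subset
    (hcont.preimage_isClosed_of_isClosed isClosed_Icc isClosed_Ici) inter_subset_left
  obtain ⟨⟨has, hsb⟩, hfs : 0 ≤ f (sSup S)⟩ := hS.sSup_mem ⟨a, ⟨le_rfl, hab⟩, ha⟩
  set s := sSup S
  have hneg : ∀ t ∈ Ioo s b, f t < 0 := fun t ht => by
    by_contra! h
    exact (le_csSup hS.bddAbove ⟨⟨has.trans ht.1.le, ht.2.le⟩, h⟩).not_gt ht.1
  have hmono : MonotoneOn f (Icc s b) := by
    refine monotoneOn_of_hasDerivWithinAt_nonneg (f' := f') (convex_Icc s b)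
      (hcont.mono (Icc_subset_Icc_left has)) (fun t ht => ?_) (fun t ht => ?_) <;>
      rw [interior_Icc] at ht
    · exact (hf t (has.trans ht.1.le)).hasDerivWithinAt
    · exact hf' t (has.trans ht.1.le) (hneg t ht).le
  linarith [hmono ⟨le_rfl, hsb⟩ ⟨hsb, le_rfl⟩ hsb]

theorem gating_variable_stays_in_unit_interval_general
    (n α β : ℝ → ℝ)
    (hα_nonneg : ∀ t ∈ Ici (0:ℝ), 0 ≤ α t) (hβ_nonneg : ∀ t ∈ Ici (0:ℝ), 0 ≤ β t)
    (hode : ∀ t ∈ Ici (0:ℝ), HasDerivAt n (α t * (1 - n t) - β t * n t) t)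
    (h0 : n 0 ∈ Icc (0:ℝ) 1) :
    ∀ t ∈ Ici (0:ℝ), n t ∈ Icc (0:ℝ) 1 := by
  intro t ht
  have hlower : 0 ≤ n t := by
    refine nonneg_of_hasDerivAt_of_nonpos_imp_deriv_nonneg hode (fun s hs hns => ?_) h0.1 ht
    nlinarith [hα_nonneg s hs, hβ_nonneg s hs]
  have hupper : 0 ≤ 1 - n t := by
    refine nonneg_of_hasDerivAt_of_nonpos_imp_deriv_nonneg (f := fun s => 1 - n s)
      (fun s hs => (hode s hs).const_sub 1)
      (fun s hs hns => ?_) (sub_nonneg.2 h0.2) ht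
    nlinarith [hα_nonneg s hs, hβ_nonneg s hs]
  exact ⟨hlower, sub_nonneg.1 hupper⟩

theorem gating_variable_stays_in_unit_interval
    (n α β : ℝ → ℝ)
    (hα_cont : ContinuousOn α (Ici 0)) (hβ_cont : ContinuousOn β (Ici 0))
    (hα_nonneg : ∀ t ∈ Ici (0:ℝ), 0 ≤ α t) (hβ_nonneg : ∀ t ∈ Ici (0:ℝ), 0 ≤ β t)
    (hode : ∀ t ∈ Ici (0:ℝ), HasDerivAt n (α t * (1 - n t) - β t * n t) t)
    (h0 : n 0 ∈ Icc (0:ℝ) 1) :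
    ∀ t ∈ Ici (0:ℝ), n t ∈ Icc (0:ℝ) 1 :=
  gating_variable_stays_in_unit_interval_general n α β hα_nonneg hβ_nonneg hode h0
end

section
/- Define F_V(V,n,m,h) = I + ḡ_Na m³ h (E_Na − V) + ḡ_K n⁴ (E_K − V) + ḡ_L (E_L − V). If n, m, h ∈ [0,1], V ∈ [E_K, E_Na], ḡ_Na, ḡ_K, ḡ_L ≥ 0, E_K ≤ E_L ≤ E_Na, and 0 ≤ I, then at V = E_K one has F_V(E_K, n, m, h) ≥ 0, and if moreover ḡ_L (E_Na − E_L) > I, then at V = E_Na one has F_V(E_Na, n, m, h) < 0. -/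
open Set

theorem HH_reaction_term_sign_on_boundary
    (I gNa gK gL EK EL ENa : ℝ) (n m h : ℝ)
    (F : ℝ → ℝ → ℝ → ℝ → ℝ)
    (hF : ∀ V n m h, F V n m h =
      I + gNa * m ^ 3 * h * (ENa - V) + gK * n ^ 4 * (EK - V) + gL * (EL - V))
    (hn : n ∈ Icc (0:ℝ) 1) (hm : m ∈ Icc (0:ℝ) 1) (hh : h ∈ Icc (0:ℝ) 1)
    (hgNa : 0 ≤ gNa) (hgK : 0 ≤ gK) (hgL : 0 ≤ gL)
    (hKL : EK ≤ EL) (hLNa : EL ≤ ENa) (hI : 0 ≤ I) :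
    0 ≤ F EK n m h ∧ (gL * (ENa - EL) > I → F ENa n m h < 0) := by
  obtain ⟨hn0, hn1⟩ := hn
  obtain ⟨hm0, hm1⟩ := hm
  obtain ⟨hh0, hh1⟩ := hh
  constructor
  · rw [hF]
    have h1 : 0 ≤ gNa * m ^ 3 * h * (ENa - EK) := by
      apply mul_nonneg (by positivity); linarith
    have h2 : 0 ≤ gK * n ^ 4 * (EK - EK) := by simp
    have h3 : 0 ≤ gL * (EL - EK) := by
      apply mul_nonneg hgL; linarith
    linarith
  · intro hlt
    rw [hF]
    have h1 : gNa * m ^ 3 * h * (ENa - ENa) = 0 := by ring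
    have h2 : gK * n ^ 4 * (EK - ENa) ≤ 0 := by
      apply mul_nonpos_of_nonneg_of_nonpos (by positivity); linarith
    nlinarith
end

section
/- For the Hodgkin–Huxley ODE system V' = F_V(V,n,m,h), n' = α_n(V)(1-n) - β_n(V)n, m' = α_m(V)(1-m) - β_m(V)m, h' = α_h(V)(1-h) - β_h(V)h, with F_V as above, parameters ḡ_i ≥ 0, E_K < E_L < E_Na, 0 ≤ I < ḡ_L(E_Na − E_L), and α's, β's continuous nonnegative functions of V: if the initial condition lies in R = [E_K, E_Na] × [0,1]³ then the solution remains in R for all t ≥ 0. -/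
/-!
Each coordinate of the Hodgkin–Huxley field is affine in that coordinate: a gating variable `x`
obeys `x' = α - (α + β) x = -(β - (α + β)(1 - x))`, and the voltage obeys
`(V - E_K)' = c₁ - G (V - E_K)`, `(E_Na - V)' = c₂ - G (E_Na - V)` with total conductance
`G = ḡ_Na m³h + ḡ_K n⁴ + ḡ_L` and `c₁, c₂ ≥ 0` once `m, h ≥ 0` and `0 ≤ I ≤ ḡ_L (E_Na - E_L)`.
A function with `f' ≥ -a f` stays nonnegative, since `f · exp (∫ a)` is nondecreasing; applying
this to `x`, `1 - x` for the gates first, and then to `V - E_K`, `E_Na - V`, gives the invariance.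
-/

open Set

theorem nonneg_of_hasDerivAt_of_neg_mul_le {a f f' : ℝ → ℝ} {t₀ : ℝ}
    (ha : ContinuousOn a (Ici t₀)) (hf : ∀ t ∈ Ici t₀, HasDerivAt f (f' t) t)
    (hf' : ∀ t ∈ Ici t₀, -(a t * f t) ≤ f' t) (h₀ : 0 ≤ f t₀) : ∀ t ∈ Ici t₀, 0 ≤ f t := by
  -- `a` is extended continuously to all of `ℝ` so that its primitive is differentiable everywhere.
  let b : ℝ → ℝ := fun t => a (max t t₀)
  have hb : Continuous b :=
    ha.comp_continuous (continuous_id.max continuous_const) fun t => le_max_right t t₀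
  have hba : ∀ t ∈ Ici t₀, b t = a t := fun t ht => congrArg a (max_eq_left ht)
  let A : ℝ → ℝ := fun u => ∫ s in t₀..u, b s
  have hA : ∀ t, HasDerivAt A (b t) t := fun t =>
    intervalIntegral.integral_hasDerivAt_right (hb.intervalIntegrable t₀ t)
      hb.aestronglyMeasurable.stronglyMeasurableAtFilter hb.continuousAt
  let g : ℝ → ℝ := fun u => f u * Real.exp (A u)
  have hg : ∀ t ∈ Ici t₀, HasDerivAt g (Real.exp (A t) * (f' t + a t * f t)) t := fun t ht =>
    ((hf t ht).mul (hA t).exp).congr_deriv (by rw [hba t ht]; ring)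
  have hmono : MonotoneOn g (Ici t₀) := by
    refine monotoneOn_of_hasDerivWithinAt_nonneg (convex_Ici t₀) (HasDerivAt.continuousOn hg)
      (fun t ht => (hg t (interior_subset ht)).hasDerivWithinAt) fun t ht =>
      mul_nonneg (Real.exp_pos _).le (by linarith [hf' t (interior_subset ht)])
  intro t ht
  have hgt : g t₀ ≤ g t := hmono self_mem_Ici ht ht
  simp only [g, A, intervalIntegral.integral_same, Real.exp_zero, mul_one] at hgt
  exact nonneg_of_mul_nonneg_left (h₀.trans hgt) (Real.exp_pos _)

theorem gate_mem_Icc {α β x : ℝ → ℝ} {t₀ : ℝ}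
    (hα : ContinuousOn α (Ici t₀)) (hβ : ContinuousOn β (Ici t₀))
    (hα₀ : ∀ t ∈ Ici t₀, 0 ≤ α t) (hβ₀ : ∀ t ∈ Ici t₀, 0 ≤ β t)
    (hx : ∀ t ∈ Ici t₀, HasDerivAt x (α t * (1 - x t) - β t * x t) t)
    (hx₀ : x t₀ ∈ Icc 0 1) : ∀ t ∈ Ici t₀, x t ∈ Icc 0 1 := by
  have hαβ : ContinuousOn (fun t => α t + β t) (Ici t₀) := hα.add hβ
  have hlo := nonneg_of_hasDerivAt_of_neg_mul_le hαβ hx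
    (fun t ht => by linarith [hα₀ t ht]) hx₀.1
  have hhi := nonneg_of_hasDerivAt_of_neg_mul_le hαβ (fun t ht => (hx t ht).const_sub 1)
    (fun t ht => by linarith [hβ₀ t ht]) (sub_nonneg.2 hx₀.2)
  exact fun t ht => ⟨hlo t ht, sub_nonneg.1 (hhi t ht)⟩

theorem voltage_mem_Icc {GNa GK V : ℝ → ℝ} {I gL EK EL ENa t₀ : ℝ}
    (hGNa : ContinuousOn GNa (Ici t₀)) (hGK : ContinuousOn GK (Ici t₀))
    (hGNa₀ : ∀ t ∈ Ici t₀, 0 ≤ GNa t) (hGK₀ : ∀ t ∈ Ici t₀, 0 ≤ GK t) (hgL : 0 ≤ gL)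
    (hKL : EK ≤ EL) (hLNa : EL ≤ ENa) (hI₀ : 0 ≤ I) (hI : I ≤ gL * (ENa - EL))
    (hV : ∀ t ∈ Ici t₀, HasDerivAt V
      (I + GNa t * (ENa - V t) + GK t * (EK - V t) + gL * (EL - V t)) t)
    (hV₀ : V t₀ ∈ Icc EK ENa) : ∀ t ∈ Ici t₀, V t ∈ Icc EK ENa := by
  have hG : ContinuousOn (fun t => GNa t + GK t + gL) (Ici t₀) :=
    (hGNa.add hGK).add continuousOn_const
  have hlo := nonneg_of_hasDerivAt_of_neg_mul_le hG (fun t ht => (hV t ht).sub_const EK)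
    (fun t ht => by
      linarith [mul_nonneg (hGNa₀ t ht) (sub_nonneg.2 (hKL.trans hLNa)),
        mul_nonneg hgL (sub_nonneg.2 hKL)]) (sub_nonneg.2 hV₀.1)
  have hhi := nonneg_of_hasDerivAt_of_neg_mul_le hG (fun t ht => (hV t ht).const_sub ENa)
    (fun t ht => by linarith [mul_nonneg (hGK₀ t ht) (sub_nonneg.2 (hKL.trans hLNa))])
    (sub_nonneg.2 hV₀.2)
  exact fun t ht => ⟨sub_nonneg.1 (hlo t ht), sub_nonneg.1 (hhi t ht)⟩

theorem HH_ODE_invariant_region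
    (I gNa gK gL EK EL ENa : ℝ)
    (hgNa : 0 ≤ gNa) (hgK : 0 ≤ gK) (hgL : 0 ≤ gL)
    (hKL : EK < EL) (hLNa : EL < ENa)
    (hI0 : 0 ≤ I) (hI : I < gL * (ENa - EL))
    (αn βn αm βm αh βh : ℝ → ℝ)
    (hcont : Continuous αn ∧ Continuous βn ∧ Continuous αm ∧ Continuous βm ∧
      Continuous αh ∧ Continuous βh)
    (hnonneg : ∀ V, 0 ≤ αn V ∧ 0 ≤ βn V ∧ 0 ≤ αm V ∧ 0 ≤ βm V ∧ 0 ≤ αh V ∧ 0 ≤ βh V)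
    (V n m h : ℝ → ℝ)
    (hV : ∀ t ∈ Ici (0:ℝ), HasDerivAt V
      (I + gNa * (m t) ^ 3 * h t * (ENa - V t) + gK * (n t) ^ 4 * (EK - V t)
        + gL * (EL - V t)) t)
    (hn : ∀ t ∈ Ici (0:ℝ), HasDerivAt n (αn (V t) * (1 - n t) - βn (V t) * n t) t)
    (hm : ∀ t ∈ Ici (0:ℝ), HasDerivAt m (αm (V t) * (1 - m t) - βm (V t) * m t) t)
    (hh : ∀ t ∈ Ici (0:ℝ), HasDerivAt h (αh (V t) * (1 - h t) - βh (V t) * h t) t)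
    (h0 : V 0 ∈ Icc EK ENa ∧ n 0 ∈ Icc (0:ℝ) 1 ∧ m 0 ∈ Icc (0:ℝ) 1 ∧ h 0 ∈ Icc (0:ℝ) 1) :
    ∀ t ∈ Ici (0:ℝ),
      V t ∈ Icc EK ENa ∧ n t ∈ Icc (0:ℝ) 1 ∧ m t ∈ Icc (0:ℝ) 1 ∧ h t ∈ Icc (0:ℝ) 1 := by
  obtain ⟨hαn, hβn, hαm, hβm, hαh, hβh⟩ := hcont
  obtain ⟨hV0, hn0, hm0, hh0⟩ := h0
  have hVc := HasDerivAt.continuousOn hV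
  have hnI := gate_mem_Icc (hαn.comp_continuousOn hVc) (hβn.comp_continuousOn hVc)
    (fun t _ => (hnonneg (V t)).1) (fun t _ => (hnonneg (V t)).2.1) hn hn0
  have hmI := gate_mem_Icc (hαm.comp_continuousOn hVc) (hβm.comp_continuousOn hVc)
    (fun t _ => (hnonneg (V t)).2.2.1) (fun t _ => (hnonneg (V t)).2.2.2.1) hm hm0
  have hhI := gate_mem_Icc (hαh.comp_continuousOn hVc) (hβh.comp_continuousOn hVc)
    (fun t _ => (hnonneg (V t)).2.2.2.2.1) (fun t _ => (hnonneg (V t)).2.2.2.2.2) hh hh0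
  have hVI := voltage_mem_Icc (GNa := fun t => gNa * m t ^ 3 * h t)
    (GK := fun t => gK * n t ^ 4)
    ((continuousOn_const.mul ((HasDerivAt.continuousOn hm).pow 3)).mul
      (HasDerivAt.continuousOn hh))
    (continuousOn_const.mul ((HasDerivAt.continuousOn hn).pow 4))
    (fun t ht => mul_nonneg (mul_nonneg hgNa (pow_nonneg (hmI t ht).1 3)) (hhI t ht).1)
    (fun t _ => by positivity) hgL hKL.le hLNa.le hI0 hI.le hV hV0
  exact fun t ht => ⟨hVI t ht, hnI t ht, hmI t ht, hhI t ht⟩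
end

section
/- Let n : [0,∞) × [a,b] → ℝ satisfy, for each x, ∂ₜ n(t,x) = α(x)(1 − n(t,x)) − β(x) n(t,x), where α, β : [a,b] → ℝ are L-Lipschitz and ξ := inf_{y∈[a,b]} (α(y) + β(y)) > 0, and n(t,x) ∈ [0,1]. Then for all x, y and t ≥ 0: |n(t,x) − n(t,y)| ≤ exp(−ξ t)|n(0,x) − n(0,y)| + (C/ξ)|x − y| for some constant C depending only on L. -/
open Set Filter
open scoped Topology

/-- One-sided slope estimate for `|w|` when `w` is differentiable. -/
lemma abs_slope_frequently_lt {w : ℝ → ℝ} {d s M r : ℝ}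
    (hd : HasDerivAt w d s)
    (hpos : 0 < w s → d ≤ M) (hneg : w s < 0 → -d ≤ M) (hzero : w s = 0 → |d| ≤ M)
    (hr : M < r) :
    ∃ᶠ z in 𝓝[>] s, (z - s)⁻¹ * (|w z| - |w s|) < r := by
  rcases lt_trichotomy (w s) 0 with h | h | h
  · -- w s < 0 : |w| = -w near s
    have hcont : ContinuousAt w s := hd.continuousAt
    have hneg' : ∀ᶠ z in 𝓝 s, w z < 0 := hcont.eventually_lt continuousAt_const h
    have hslope : Tendsto (slope w s) (𝓝[>] s) (𝓝 d) :=
      (hasDerivAt_iff_tendsto_slope.1 hd).mono_left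
        (nhdsWithin_mono s fun z hz => ne_of_gt hz)
    have hlt : ∀ᶠ z in 𝓝[>] s, -slope w s z < r := by
      have : Tendsto (fun z => -slope w s z) (𝓝[>] s) (𝓝 (-d)) := hslope.neg
      exact this.eventually_lt_const (lt_of_le_of_lt (hneg h) hr)
    refine ((hlt.and (eventually_nhdsWithin_of_eventually_nhds hneg')).mono ?_).frequently
    rintro z ⟨hz1, hz2⟩
    have : (z - s)⁻¹ * (|w z| - |w s|) = -slope w s z := by
      rw [abs_of_neg hz2, abs_of_neg h, slope_def_field]
      field_simp
      ring
    rwa [this]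
  · -- w s = 0 : use the norm slope estimate
    have hd' : HasDerivWithinAt w d (Ici s) s := hd.hasDerivWithinAt
    have hr' : ‖d‖ < r := lt_of_le_of_lt (hzero h) hr
    have := hd'.liminf_right_norm_slope_le hr'
    refine this.mp (eventually_nhdsWithin_of_forall fun z hz hlt => ?_)
    have hzs : (0:ℝ) < z - s := sub_pos.2 hz
    have : (z - s)⁻¹ * (|w z| - |w s|) ≤ ‖z - s‖⁻¹ * ‖w z - w s‖ := by
      rw [h, abs_zero, sub_zero, sub_zero, Real.norm_eq_abs, Real.norm_eq_abs,
        abs_of_pos hzs]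
    exact lt_of_le_of_lt this hlt
  · -- 0 < w s : |w| = w near s
    have hcont : ContinuousAt w s := hd.continuousAt
    have hpos' : ∀ᶠ z in 𝓝 s, 0 < w z := continuousAt_const.eventually_lt hcont h
    have hslope : Tendsto (slope w s) (𝓝[>] s) (𝓝 d) :=
      (hasDerivAt_iff_tendsto_slope.1 hd).mono_left
        (nhdsWithin_mono s fun z hz => ne_of_gt hz)
    have hlt : ∀ᶠ z in 𝓝[>] s, slope w s z < r :=
      hslope.eventually_lt_const (lt_of_le_of_lt (hpos h) hr)
    refine ((hlt.and (eventually_nhdsWithin_of_eventually_nhds hpos')).mono ?_).frequently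
    rintro z ⟨hz1, hz2⟩
    have : (z - s)⁻¹ * (|w z| - |w s|) = slope w s z := by
      rw [abs_of_pos hz2, abs_of_pos h, slope_def_field]
      ring
    rwa [this]

theorem gating_equicontinuity_estimate
    (a b : ℝ) (hab : a < b)
    (α β : ℝ → ℝ) (L : ℝ) (hL : 0 ≤ L)
    (hαlip : ∀ x ∈ Icc a b, ∀ y ∈ Icc a b, |α x - α y| ≤ L * |x - y|)
    (hβlip : ∀ x ∈ Icc a b, ∀ y ∈ Icc a b, |β x - β y| ≤ L * |x - y|)
    (hα_nonneg : ∀ x ∈ Icc a b, 0 ≤ α x) (hβ_nonneg : ∀ x ∈ Icc a b, 0 ≤ β x)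
    (ξ : ℝ) (hξpos : 0 < ξ) (hξ : ∀ y ∈ Icc a b, ξ ≤ α y + β y)
    (n : ℝ → ℝ → ℝ)
    (hrange : ∀ t ∈ Ici (0:ℝ), ∀ x ∈ Icc a b, n t x ∈ Icc (0:ℝ) 1)
    (hode : ∀ x ∈ Icc a b, ∀ t ∈ Ici (0:ℝ),
      HasDerivAt (fun τ => n τ x) (α x * (1 - n t x) - β x * n t x) t) :
    ∃ C : ℝ, C = 2 * L ∧ ∀ x ∈ Icc a b, ∀ y ∈ Icc a b, ∀ t ∈ Ici (0:ℝ),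
      |n t x - n t y| ≤ Real.exp (-ξ * t) * |n 0 x - n 0 y| + (C / ξ) * |x - y| := by
  refine ⟨2 * L, rfl, fun x hx y hy t ht => ?_⟩
  set w : ℝ → ℝ := fun τ => n τ x - n τ y with hw
  set ε : ℝ := 2 * L * |x - y| with hε
  set δ : ℝ := |n 0 x - n 0 y| with hδ
  have hεnn : 0 ≤ ε := by positivity
  have ht0 : (0:ℝ) ≤ t := ht
  -- the derivative of w at time τ
  have hwderiv : ∀ τ ∈ Ici (0:ℝ), HasDerivAt w
      ((α x * (1 - n τ x) - β x * n τ x) - (α y * (1 - n τ y) - β y * n τ y)) τ :=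
    fun τ hτ => (hode x hx τ hτ).sub (hode y hy τ hτ)
  -- the key sign estimates on the derivative
  have key : ∀ τ ∈ Ici (0:ℝ),
      let d := (α x * (1 - n τ x) - β x * n τ x) - (α y * (1 - n τ y) - β y * n τ y)
      (0 < w τ → d ≤ -ξ * |w τ| + ε) ∧ (w τ < 0 → -d ≤ -ξ * |w τ| + ε) ∧
        (w τ = 0 → |d| ≤ -ξ * |w τ| + ε) := by
    intro τ hτ
    set d := (α x * (1 - n τ x) - β x * n τ x) - (α y * (1 - n τ y) - β y * n τ y) with hd
    have hc : ξ ≤ α x + β x := hξ x hx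
    have hny : n τ y ∈ Icc (0:ℝ) 1 := hrange τ hτ y hy
    have hrem : |d + (α x + β x) * w τ| ≤ ε := by
      have h1 : d + (α x + β x) * w τ
          = (α x - α y) * (1 - n τ y) - (β x - β y) * n τ y := by
        simp only [hd, hw]; ring
      rw [h1]
      have h2 : |(α x - α y) * (1 - n τ y) - (β x - β y) * n τ y|
          ≤ |α x - α y| * |1 - n τ y| + |β x - β y| * |n τ y| := by
        calc _ ≤ |(α x - α y) * (1 - n τ y)| + |(β x - β y) * n τ y| := abs_sub _ _
          _ = _ := by rw [abs_mul, abs_mul]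
      have h3 : |1 - n τ y| ≤ 1 := by
        rw [abs_le]; constructor <;> [linarith [hny.2]; linarith [hny.1]]
      have h4 : |n τ y| ≤ 1 := by
        rw [abs_le]; constructor <;> [linarith [hny.1]; linarith [hny.2]]
      calc _ ≤ |α x - α y| * |1 - n τ y| + |β x - β y| * |n τ y| := h2
        _ ≤ L * |x - y| * 1 + L * |x - y| * 1 := by
            gcongr
            · exact hαlip x hx y hy
            · exact hβlip x hx y hy
        _ = ε := by rw [hε]; ring
    have habs := abs_le.1 hrem
    refine ⟨fun hpos => ?_, fun hneg => ?_, fun hz => ?_⟩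
    · rw [abs_of_pos hpos]
      nlinarith [habs.2, mul_le_mul_of_nonneg_right hc hpos.le]
    · rw [abs_of_neg hneg]
      nlinarith [habs.1, mul_le_mul_of_nonneg_right hc (neg_pos.2 hneg).le]
    · rw [hz, abs_zero, mul_zero, zero_add]
      have : d = d + (α x + β x) * w τ := by rw [hz]; ring
      rw [this]; exact hrem
  -- apply the Grönwall-type inequality on [0, t]
  have main : ∀ s ∈ Icc (0:ℝ) t, |w s| ≤ gronwallBound δ (-ξ) ε (s - 0) := by
    apply le_gronwallBound_of_liminf_deriv_right_le
      (f' := fun τ => -ξ * |w τ| + ε)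
    · intro s hs
      have hs0 : s ∈ Ici (0:ℝ) := hs.1
      exact ((hwderiv s hs0).continuousAt.abs).continuousWithinAt
    · intro s hs r hr
      have hs0 : s ∈ Ici (0:ℝ) := hs.1
      obtain ⟨h1, h2, h3⟩ := key s hs0
      exact abs_slope_frequently_lt (hwderiv s hs0) h1 h2 h3 hr
    · exact le_refl δ
    · exact fun s _ => le_refl _
  have hgb := main t ⟨ht0, le_refl t⟩
  rw [sub_zero] at hgb
  have hK : (-ξ) ≠ 0 := by linarith
  rw [gronwallBound_of_K_ne_0 hK] at hgb
  have hexp : Real.exp (-ξ * t) ≤ 1 := Real.exp_le_one_iff.2 (by nlinarith)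
  have hexp0 : 0 < Real.exp (-ξ * t) := Real.exp_pos _
  calc |n t x - n t y| = |w t| := rfl
    _ ≤ δ * Real.exp (-ξ * t) + ε / (-ξ) * (Real.exp (-ξ * t) - 1) := hgb
    _ ≤ Real.exp (-ξ * t) * δ + (2 * L / ξ) * |x - y| := by
        have h1 : ε / (-ξ) * (Real.exp (-ξ * t) - 1) = ε / ξ * (1 - Real.exp (-ξ * t)) := by
          field_simp; ring
        rw [h1]
        have h2 : ε / ξ * (1 - Real.exp (-ξ * t)) ≤ ε / ξ := by
          nlinarith [div_nonneg hεnn hξpos.le]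
        have h3 : ε / ξ = (2 * L / ξ) * |x - y| := by rw [hε]; ring
        linarith [h2, h3.le]
end
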